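/- Suppose additionally that sqrt(1/3 - (x - 1/2)^2) + sqrt(3)/2 <= y < sqrt(1 - (x - 1/2)^2) + 3*sqrt(3)/2 (region R3_4). Set A3 = 9 + 5*y^2 - (2x - 1)^2, B3 = ((x - 2)^2 + y^2) * ((x + 1)^2 + y^2), r = sqrt(A3 - sqrt(A3^2 - 16*B3)) / (8*sqrt(2)), and R = sqrt(16*r^2 - 1). Then the configuration p : Fin 4 -> R^2 given by p 0 = (0,0), p 1 = (1/2, R/2), p 2 = (0, R), p 3 = (1/2, 3R/2) is a packing of 4 equal circles of radius r on the flat torus R^2/Lambda; that is, ||p i - p j + lambda|| >= 2r for all i, j in Fin 4 and all lambda in Lambda with (i ≠ j or lambda ≠ 0). -/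

import Mathlib

/-!
Modulo the lattice, `p j = j • w` for `w = (1/2, R/2)`, so every vector `p i - p j + λ` has the
form `j • w + m • v₁ + n • v₂` with `|j| ≤ 3`, and up to sign `n ≥ 0`. For `n ≥ 2`, or `n = 1`
and `j ≥ 0`, its height is at least `y ≥ 1 ≥ 2r` as soon as `3R ≤ 2y`. The other cases (`n = 0`,
or `n = 1` and `j < 0`) reduce, by `|t| ≤ |t + m|` for `|t| ≤ 1/2`, to `2r ≤ 1`, `2r ≤ R`,
`16 r² ≤ 1 + R²` (an equality: `p 0` touches `p 1`) and the distances from `p 3` and `p 2`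
to `v₂`.

The radius is the one at which `p 3` touches `v₂`: `t = r²` is the smaller root of
`1024 t² - 16 A t + B`, which for `R² = 16 t - 1` factors as
`((x - 1/2)² + (y - 3R/2)² - 4t) ((x - 1/2)² + (y + 3R/2)² - 4t)`. Every bound `r² ≤ c` is then
the sign of this quadratic at `c`, and the two inequalities defining the region are exactly its
signs at `t = 1/12` (`2r ≤ R`) and at `t = 1/4` (`2r ≤ 1`).
-/

noncomputable section

/-- The point `(a, b)` in the Euclidean plane. -/
def pt (a b : ℝ) : EuclideanSpace ℝ (Fin 2) :=
  (WithLp.equiv 2 (Fin 2 → ℝ)).symm ![a, b]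

/-- The lattice generated by `v1 = (1,0)` and `v2 = (x,y)`. -/
def TLat (x y : ℝ) : Set (EuclideanSpace ℝ (Fin 2)) :=
  {v | ∃ m n : ℤ, v = (m : ℝ) • pt 1 0 + (n : ℝ) • pt x y}

/-- `p` is a packing of `k` equal circles of radius `r` on the flat torus `ℝ²/Λ(x,y)`. -/
def IsPacking (x y : ℝ) {k : ℕ} (r : ℝ) (p : Fin k → EuclideanSpace ℝ (Fin 2)) : Prop :=
  ∀ i j : Fin k, ∀ l ∈ TLat x y, (i ≠ j ∨ l ≠ 0) → 2 * r ≤ ‖p i - p j + l‖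

@[simp]
lemma pt_add_pt (a b c d : ℝ) : pt a b + pt c d = pt (a + c) (b + d) := by
  ext i; fin_cases i <;> simp [pt]

@[simp]
lemma smul_pt (c a b : ℝ) : c • pt a b = pt (c * a) (c * b) := by
  ext i; fin_cases i <;> simp [pt]

@[simp]
lemma pt_sub_pt (a b c d : ℝ) : pt a b - pt c d = pt (a - c) (b - d) := by
  ext i; fin_cases i <;> simp [pt]

@[simp]
lemma neg_pt (a b : ℝ) : -pt a b = pt (-a) (-b) := by
  ext i; fin_cases i <;> simp [pt]

@[simp]
lemma pt_zero_zero : pt 0 0 = 0 := by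
  ext i; fin_cases i <;> simp [pt]

lemma norm_pt (a b : ℝ) : ‖pt a b‖ = √(a ^ 2 + b ^ 2) := by
  simp [pt, EuclideanSpace.norm_eq, Fin.sum_univ_two]

lemma sub_add_mem_tLat {x y : ℝ} {a b c : EuclideanSpace ℝ (Fin 2)} (ha : a ∈ TLat x y)
    (hb : b ∈ TLat x y) (hc : c ∈ TLat x y) : a - b + c ∈ TLat x y := by
  obtain ⟨m₁, n₁, rfl⟩ := ha
  obtain ⟨m₂, n₂, rfl⟩ := hb
  obtain ⟨m₃, n₃, rfl⟩ := hc
  exact ⟨m₁ - m₂ + m₃, n₁ - n₂ + n₃, by push_cast; module⟩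

theorem isPacking_of_sub_smul_mem {x y r : ℝ} {k : ℕ} {p : Fin k → EuclideanSpace ℝ (Fin 2)}
    (w : EuclideanSpace ℝ (Fin 2)) (hp : ∀ i : Fin k, p i - (i : ℝ) • w ∈ TLat x y)
    (hw : ∀ j : ℤ, |j| < k → ∀ l ∈ TLat x y, (j ≠ 0 ∨ l ≠ 0) → 2 * r ≤ ‖(j : ℝ) • w + l‖) :
    IsPacking x y r p := by
  intro i j l hl hij
  have hsplit : p i - p j + l =
      (((i : ℤ) - j : ℤ) : ℝ) • w + ((p i - (i : ℝ) • w) - (p j - (j : ℝ) • w) + l) := by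
    push_cast; module
  rw [hsplit]
  refine hw _ (abs_sub_lt_iff.mpr ⟨by omega, by omega⟩) _ (sub_add_mem_tLat (hp i) (hp j) hl) ?_
  rcases eq_or_ne i j with rfl | hne
  · simpa using hij
  · exact Or.inl (sub_ne_zero.mpr (by exact_mod_cast Fin.val_ne_of_ne hne))

lemma sq_le_sq_add_intCast {t : ℝ} (ht : |t| ≤ 1 / 2) (m : ℤ) : t ^ 2 ≤ (t + m) ^ 2 := by
  rcases abs_le.mp ht with ⟨h1, h2⟩
  rcases lt_trichotomy m 0 with h | rfl | h
  · have hm : (m : ℝ) ≤ -1 := by exact_mod_cast (by omega : m ≤ -1)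
    nlinarith
  · simp
  · have hm : (1 : ℝ) ≤ m := by exact_mod_cast h
    nlinarith

section LatticeBounds

variable {x y r R : ℝ}

lemma four_mul_sq_le_of_n_eq_zero (hr1 : 4 * r ^ 2 ≤ 1) (hrR : 4 * r ^ 2 ≤ R ^ 2)
    (hr_half : 16 * r ^ 2 ≤ 1 + R ^ 2) {j m : ℤ} (hj : |j| ≤ 3) (hne : j ≠ 0 ∨ m ≠ 0) :
    4 * r ^ 2 ≤ ((j : ℝ) / 2 + m) ^ 2 + ((j : ℝ) * R / 2) ^ 2 := by
  have half := sq_le_sq_add_intCast (t := 1 / 2) (by norm_num [abs_of_pos]) m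
  have neg_half := sq_le_sq_add_intCast (t := -1 / 2) (by norm_num [abs_of_neg]) m
  rcases abs_le.mp hj with ⟨hj1, hj2⟩
  interval_cases j <;> push_cast
  · nlinarith [sq_nonneg (-3 / 2 + (m : ℝ))]
  · nlinarith [sq_nonneg (-2 / 2 + (m : ℝ))]
  · nlinarith
  · have hm : (1 : ℝ) ≤ |(m : ℝ)| := by
      rw [← Int.cast_abs]; exact_mod_cast Int.one_le_abs (by simpa using hne)
    nlinarith [sq_abs (m : ℝ)]
  · nlinarith
  · nlinarith [sq_nonneg (2 / 2 + (m : ℝ))]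
  · nlinarith [sq_nonneg (3 / 2 + (m : ℝ))]

lemma four_mul_sq_le_of_n_pos (hx0 : 0 ≤ x) (hx1 : x ≤ 1 / 2) (hy : 1 ≤ y) (hR : 0 ≤ R)
    (hRy : 3 * R ≤ 2 * y) (hr1 : 4 * r ^ 2 ≤ 1)
    (h3 : 4 * r ^ 2 ≤ (x - 1 / 2) ^ 2 + (y - 3 * R / 2) ^ 2)
    (h2 : 4 * r ^ 2 ≤ x ^ 2 + (y - R) ^ 2) {j m n : ℤ} (hj : -3 ≤ j) (hn : 0 < n) :
    4 * r ^ 2 ≤ ((j : ℝ) / 2 + m + n * x) ^ 2 + ((j : ℝ) * R / 2 + n * y) ^ 2 := by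
  by_cases hhigh : 0 ≤ j ∨ 2 ≤ n
  · have hj' : (-3 : ℝ) ≤ j := by exact_mod_cast hj
    have hn' : (1 : ℝ) ≤ n := by exact_mod_cast hn
    have : 1 ≤ (j : ℝ) * R / 2 + n * y := by
      rcases hhigh with hj0 | hn2
      · have : (0 : ℝ) ≤ j := by exact_mod_cast hj0
        nlinarith
      · have : (2 : ℝ) ≤ n := by exact_mod_cast hn2
        nlinarith
    nlinarith [sq_nonneg ((j : ℝ) / 2 + m + n * x)]
  · obtain ⟨hj0, hn2⟩ : j < 0 ∧ n < 2 := by omega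
    obtain rfl : n = 1 := by omega
    have hxh : |x - 1 / 2| ≤ 1 / 2 := abs_le.mpr ⟨by linarith, by linarith⟩
    have hx : |x| ≤ 1 / 2 := abs_le.mpr ⟨by linarith, by linarith⟩
    have h31 := sq_le_sq_add_intCast hxh (m - 1)
    have h1 := sq_le_sq_add_intCast hxh m
    have h21 := sq_le_sq_add_intCast hx (m - 1)
    push_cast at h31 h1 h21
    interval_cases j <;> push_cast
    · linarith
    · linarith
    · nlinarith [mul_nonneg hR (by linarith : 0 ≤ y - R)]

lemma four_mul_sq_le_of_abs_le_three (hx0 : 0 ≤ x) (hx1 : x ≤ 1 / 2) (hy : 1 ≤ y) (hR : 0 ≤ R)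
    (hRy : 3 * R ≤ 2 * y) (hr1 : 4 * r ^ 2 ≤ 1) (hrR : 4 * r ^ 2 ≤ R ^ 2)
    (hr_half : 16 * r ^ 2 ≤ 1 + R ^ 2) (h3 : 4 * r ^ 2 ≤ (x - 1 / 2) ^ 2 + (y - 3 * R / 2) ^ 2)
    (h2 : 4 * r ^ 2 ≤ x ^ 2 + (y - R) ^ 2) {j m n : ℤ} (hj : |j| ≤ 3)
    (hne : j ≠ 0 ∨ m ≠ 0 ∨ n ≠ 0) :
    4 * r ^ 2 ≤ ((j : ℝ) / 2 + m + n * x) ^ 2 + ((j : ℝ) * R / 2 + n * y) ^ 2 := by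
  rcases abs_le.mp hj with ⟨hj1, hj2⟩
  rcases lt_trichotomy n 0 with hn | rfl | hn
  · have := four_mul_sq_le_of_n_pos hx0 hx1 hy hR hRy hr1 h3 h2 (j := -j) (m := -m)
      (n := -n) (by omega) (by omega)
    push_cast at this
    linarith
  · simpa using four_mul_sq_le_of_n_eq_zero hr1 hrR hr_half hj (by tauto)
  · exact four_mul_sq_le_of_n_pos hx0 hx1 hy hR hRy hr1 h3 h2 hj1 hn

end LatticeBounds

theorem isPacking_column_of_bounds {x y r R : ℝ} (hx0 : 0 ≤ x) (hx1 : x ≤ 1 / 2) (hy : 1 ≤ y)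
    (hR : 0 ≤ R) (hRy : 3 * R ≤ 2 * y) (hr1 : 4 * r ^ 2 ≤ 1) (hrR : 4 * r ^ 2 ≤ R ^ 2)
    (hr_half : 16 * r ^ 2 ≤ 1 + R ^ 2) (h3 : 4 * r ^ 2 ≤ (x - 1 / 2) ^ 2 + (y - 3 * R / 2) ^ 2)
    (h2 : 4 * r ^ 2 ≤ x ^ 2 + (y - R) ^ 2) :
    IsPacking x y r ![pt 0 0, pt (1 / 2) (R / 2), pt 0 R, pt (1 / 2) (3 * R / 2)] := by
  refine isPacking_of_sub_smul_mem (pt (1 / 2) (R / 2)) ?_ ?_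
  · intro i
    fin_cases i
    · exact ⟨0, 0, by simp⟩
    · exact ⟨0, 0, by simp⟩
    · exact ⟨-1, 0, by simp; ring_nf⟩
    · exact ⟨-1, 0, by simp; ring_nf⟩
  · rintro j hj _ ⟨m, n, rfl⟩ hne
    have hsum : (j : ℝ) • pt (1 / 2) (R / 2) + ((m : ℝ) • pt 1 0 + (n : ℝ) • pt x y) =
        pt ((j : ℝ) / 2 + m + n * x) ((j : ℝ) * R / 2 + n * y) := by
      simp only [smul_pt, pt_add_pt]; ring_nf
    have hne' : j ≠ 0 ∨ m ≠ 0 ∨ n ≠ 0 := hne.imp_right fun h => by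
      contrapose! h; simp [h.1, h.2]
    rw [hsum, norm_pt]
    refine (le_abs_self _).trans (Real.abs_le_sqrt ?_)
    linarith [four_mul_sq_le_of_abs_le_three hx0 hx1 hy hR hRy hr1 hrR hr_half h3 h2
      (Int.lt_add_one_iff.mp hj) hne']

def contactPoly (x y t : ℝ) : ℝ :=
  ((x - 1 / 2) ^ 2 + y ^ 2 + 32 * t - 9 / 4) ^ 2 - 9 * y ^ 2 * (16 * t - 1)

lemma contactPoly_eq_mul {x y t s : ℝ} (hs : 4 * s ^ 2 = 9 * (16 * t - 1)) :
    contactPoly x y t =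
      ((x - 1 / 2) ^ 2 + (y - s) ^ 2 - 4 * t) * ((x - 1 / 2) ^ 2 + (y + s) ^ 2 - 4 * t) := by
  unfold contactPoly
  linear_combination (y ^ 2 - ((x - 1 / 2) ^ 2 + y ^ 2 + s ^ 2 - 4 * t) / 2
    + (4 * s ^ 2 - 9 * (16 * t - 1)) / 16) * hs

lemma sub_sqrt_le_of_nonpos {a b c : ℝ} (h : c ^ 2 - 2 * a * c + b ≤ 0) :
    a - √(a ^ 2 - b) ≤ c := by
  have := Real.abs_le_sqrt (show (a - c) ^ 2 ≤ a ^ 2 - b by linarith)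
  linarith [le_abs_self (a - c)]

lemma le_sub_sqrt_of_nonneg {a b c : ℝ} (hc : c ≤ a) (h : 0 ≤ c ^ 2 - 2 * a * c + b) :
    c ≤ a - √(a ^ 2 - b) := by
  have := Real.sqrt_le_sqrt (show a ^ 2 - b ≤ (a - c) ^ 2 by linarith)
  rw [Real.sqrt_sq (by linarith)] at this
  linarith

lemma sub_sqrt_isRoot {a b : ℝ} (h : b ≤ a ^ 2) :
    (a - √(a ^ 2 - b)) ^ 2 - 2 * a * (a - √(a ^ 2 - b)) + b = 0 := by
  linear_combination Real.sq_sqrt (sub_nonneg.mpr h)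

def coeffA3 (x y : ℝ) : ℝ := 9 + 5 * y ^ 2 - (2 * x - 1) ^ 2

def coeffB3 (x y : ℝ) : ℝ := ((x - 2) ^ 2 + y ^ 2) * ((x + 1) ^ 2 + y ^ 2)

lemma sixteen_mul_contactPoly (x y t : ℝ) :
    16 * contactPoly x y t = (128 * t) ^ 2 - 2 * coeffA3 x y * (128 * t) + 16 * coeffB3 x y := by
  unfold contactPoly coeffA3 coeffB3; ring

def radiusR3 (x y : ℝ) : ℝ :=
  √(coeffA3 x y - √(coeffA3 x y ^ 2 - 16 * coeffB3 x y)) / (8 * √2)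

section radiusR3

variable {x y : ℝ}

lemma sq_sub_half_le (hx0 : 0 ≤ x) (hx1 : x ≤ 1 / 2) : (x - 1 / 2) ^ 2 ≤ 1 / 4 := by
  nlinarith

lemma sixteen_mul_coeffB3_le_sq (hx0 : 0 ≤ x) (hx1 : x ≤ 1 / 2) :
    16 * coeffB3 x y ≤ coeffA3 x y ^ 2 := by
  have hv := sq_sub_half_le hx0 hx1
  have : coeffA3 x y ^ 2 - 16 * coeffB3 x y = 9 * y ^ 2 * (y ^ 2 + 2 - 8 * (x - 1 / 2) ^ 2) := by
    unfold coeffA3 coeffB3; ring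
  nlinarith [sq_nonneg y]

lemma sq_radiusR3 (hx0 : 0 ≤ x) (hx1 : x ≤ 1 / 2) :
    128 * radiusR3 x y ^ 2 = coeffA3 x y - √(coeffA3 x y ^ 2 - 16 * coeffB3 x y) := by
  have hA : 0 ≤ coeffA3 x y := by unfold coeffA3; nlinarith [sq_nonneg y]
  have hB : 0 ≤ coeffB3 x y := by unfold coeffB3; positivity
  have hS : √(coeffA3 x y ^ 2 - 16 * coeffB3 x y) ≤ coeffA3 x y := by
    rw [Real.sqrt_le_left hA]; linarith
  rw [radiusR3, div_pow, Real.sq_sqrt (by linarith), mul_pow, Real.sq_sqrt zero_le_two]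
  ring

lemma contactPoly_radiusR3 (hx0 : 0 ≤ x) (hx1 : x ≤ 1 / 2) :
    contactPoly x y (radiusR3 x y ^ 2) = 0 := by
  have h := sixteen_mul_contactPoly x y (radiusR3 x y ^ 2)
  rw [sq_radiusR3 hx0 hx1, sub_sqrt_isRoot (sixteen_mul_coeffB3_le_sq hx0 hx1)] at h
  linarith

lemma sq_radiusR3_le {t : ℝ} (hx0 : 0 ≤ x) (hx1 : x ≤ 1 / 2) (ht : contactPoly x y t ≤ 0) :
    radiusR3 x y ^ 2 ≤ t := by
  have := sub_sqrt_le_of_nonpos (a := coeffA3 x y) (b := 16 * coeffB3 x y) (c := 128 * t)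
    (by linarith [sixteen_mul_contactPoly x y t])
  linarith [sq_radiusR3 hx0 hx1 (y := y)]

lemma le_sq_radiusR3 {t : ℝ} (hx0 : 0 ≤ x) (hx1 : x ≤ 1 / 2) (hA : 128 * t ≤ coeffA3 x y)
    (ht : 0 ≤ contactPoly x y t) : t ≤ radiusR3 x y ^ 2 := by
  have := le_sub_sqrt_of_nonneg (b := 16 * coeffB3 x y) hA
    (by linarith [sixteen_mul_contactPoly x y t])
  linarith [sq_radiusR3 hx0 hx1 (y := y)]

lemma four_thirds_le_sq (hv : (x - 1 / 2) ^ 2 ≤ 1 / 4) (hy : √3 / 2 ≤ y)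
    (hreg : 1 / 3 - (x - 1 / 2) ^ 2 ≤ (y - √3 / 2) ^ 2) : 4 / 3 ≤ y ^ 2 := by
  have h3 : √3 ^ 2 = 3 := Real.sq_sqrt (by norm_num)
  have : √3 / 6 ≤ y - √3 / 2 :=
    (pow_le_pow_iff_left₀ (by positivity) (by linarith) two_ne_zero).mp (by linarith)
  nlinarith [Real.sqrt_nonneg 3]

lemma one_le_twelve_mul_sq_radiusR3 (hx0 : 0 ≤ x) (hx1 : x ≤ 1 / 2) (hy : √3 / 2 ≤ y)
    (hreg : 1 / 3 - (x - 1 / 2) ^ 2 ≤ (y - √3 / 2) ^ 2) : 1 ≤ 12 * radiusR3 x y ^ 2 := by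
  have h3 : √3 ^ 2 = 3 := Real.sq_sqrt (by norm_num)
  have hv := sq_sub_half_le hx0 hx1
  have hy2 : 3 / 4 ≤ y ^ 2 := by nlinarith [Real.sqrt_nonneg 3]
  have hA : 128 * (1 / 12) ≤ coeffA3 x y := by unfold coeffA3; nlinarith
  have hfac := contactPoly_eq_mul (x := x) (y := y) (t := 1 / 12) (s := √3 / 2) (by linarith)
  have : 0 ≤ contactPoly x y (1 / 12) := by
    rw [hfac]
    apply mul_nonneg <;> nlinarith [Real.sqrt_nonneg 3]
  linarith [le_sq_radiusR3 hx0 hx1 hA this]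

lemma one_hundred_forty_four_mul_sq_radiusR3_le (hx0 : 0 ≤ x) (hx1 : x ≤ 1 / 2) (hy : 1 ≤ y ^ 2) :
    144 * radiusR3 x y ^ 2 ≤ 4 * y ^ 2 + 9 := by
  have hv := sq_sub_half_le hx0 hx1
  have hfac := contactPoly_eq_mul (x := x) (y := y) (t := (4 * y ^ 2 + 9) / 144) (s := y)
    (by ring)
  have : contactPoly x y ((4 * y ^ 2 + 9) / 144) ≤ 0 := by
    rw [hfac]
    apply mul_nonpos_of_nonpos_of_nonneg <;> nlinarith
  linarith [sq_radiusR3_le hx0 hx1 this]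

lemma four_mul_sq_radiusR3_le_one (hx0 : 0 ≤ x) (hx1 : x ≤ 1 / 2) (hy : 1 ≤ y)
    (hreg : y < √(1 - (x - 1 / 2) ^ 2) + 3 * √3 / 2) : 4 * radiusR3 x y ^ 2 ≤ 1 := by
  have h3 : √3 ^ 2 = 3 := Real.sq_sqrt (by norm_num)
  rcases le_total y (3 * √3 / 2) with hlow | hhigh
  · have := one_hundred_forty_four_mul_sq_radiusR3_le hx0 hx1 (y := y) (by nlinarith)
    nlinarith [Real.sqrt_nonneg 3]
  · have hv := sq_sub_half_le hx0 hx1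
    have hfac := contactPoly_eq_mul (x := x) (y := y) (t := 1 / 4) (s := 3 * √3 / 2) (by linarith)
    have hnear := (Real.lt_sqrt (by linarith)).mp (show y - 3 * √3 / 2 < √(1 - (x - 1 / 2) ^ 2) by
      linarith)
    have : contactPoly x y (1 / 4) ≤ 0 := by
      rw [hfac]
      apply mul_nonpos_of_nonpos_of_nonneg <;> nlinarith [Real.sqrt_nonneg 3]
    linarith [sq_radiusR3_le hx0 hx1 this]

lemma twenty_eight_mul_sq_radiusR3_le (hx0 : 0 ≤ x) (hx1 : x ≤ 1 / 2) (hy : 4 / 3 ≤ y ^ 2) :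
    28 * radiusR3 x y ^ 2 ≤ (x + 1) ^ 2 + y ^ 2 := by
  have hfac : contactPoly x y (((x + 1) ^ 2 + y ^ 2) / 28) =
      -(9 * ((x + 1) ^ 2 + y ^ 2) / 49) * (3 * y ^ 2 - (5 * x - 2) ^ 2) := by
    unfold contactPoly; ring
  have : contactPoly x y (((x + 1) ^ 2 + y ^ 2) / 28) ≤ 0 := by
    rw [hfac]
    apply mul_nonpos_of_nonpos_of_nonneg
    · have : 0 ≤ (x + 1) ^ 2 + y ^ 2 := by positivity
      linarith
    · nlinarith
  linarith [sq_radiusR3_le hx0 hx1 this]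

end radiusR3

lemma contact_of_contactPoly_eq_zero {x y t R : ℝ} (hy : 0 ≤ y) (hR : 0 ≤ R)
    (hR2 : R ^ 2 = 16 * t - 1) (ht : 1 ≤ 12 * t) (h : contactPoly x y t = 0) :
    (x - 1 / 2) ^ 2 + (y - 3 * R / 2) ^ 2 = 4 * t := by
  rw [contactPoly_eq_mul (s := 3 * R / 2) (by linarith)] at h
  have hfar : 0 < (x - 1 / 2) ^ 2 + (y + 3 * R / 2) ^ 2 - 4 * t := by
    nlinarith [sq_nonneg (x - 1 / 2), mul_nonneg hy hR]
  linarith [(mul_eq_zero.mp h).resolve_right hfar.ne']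

theorem four_circles_packing_R3_general (x y : ℝ) (hx0 : 0 ≤ x) (hx1 : x ≤ 1 / 2)
    (hreg1 : Real.sqrt (1 / 3 - (x - 1 / 2) ^ 2) + Real.sqrt 3 / 2 ≤ y) (hreg2 : y < Real.sqrt (1 - (x - 1 / 2) ^ 2) + 3 * Real.sqrt 3 / 2)
    (A3 B3 : ℝ) (hA3 : A3 = 9 + 5 * y ^ 2 - (2 * x - 1) ^ 2)
    (hB3 : B3 = ((x - 2) ^ 2 + y ^ 2) * ((x + 1) ^ 2 + y ^ 2))
    (r R : ℝ) (hr : r = Real.sqrt (A3 - Real.sqrt (A3 ^ 2 - 16 * B3)) / (8 * Real.sqrt 2))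
    (hR : R = Real.sqrt (16 * r ^ 2 - 1))
    : IsPacking x y r ![pt 0 0, pt (1 / 2) (R / 2), pt 0 R, pt (1 / 2) (3 * R / 2)] := by
  subst hA3 hB3
  replace hr : r = radiusR3 x y := hr
  subst hr
  obtain ⟨hy₀, hreg₁⟩ := Real.sqrt_le_iff.mp (show √(1 / 3 - (x - 1 / 2) ^ 2) ≤ y - √3 / 2 by
    linarith)
  rw [sub_nonneg] at hy₀
  have hy_sq : 4 / 3 ≤ y ^ 2 := four_thirds_le_sq (sq_sub_half_le hx0 hx1) hy₀ hreg₁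
  have hy1 : 1 ≤ y := by nlinarith [Real.sqrt_nonneg 3]
  have h12 := one_le_twelve_mul_sq_radiusR3 hx0 hx1 hy₀ hreg₁
  have hR0 : 0 ≤ R := hR ▸ Real.sqrt_nonneg _
  have hR2 : R ^ 2 = 16 * radiusR3 x y ^ 2 - 1 := hR ▸ Real.sq_sqrt (by linarith)
  have hRy : 3 * R ≤ 2 * y := by
    nlinarith [one_hundred_forty_four_mul_sq_radiusR3_le hx0 hx1 (y := y) (by linarith)]
  have hcontact := contact_of_contactPoly_eq_zero (by linarith) hR0 hR2 h12
    (contactPoly_radiusR3 hx0 hx1)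
  have hdiag := twenty_eight_mul_sq_radiusR3_le hx0 hx1 hy_sq
  exact isPacking_column_of_bounds hx0 hx1 hy1 hR0 hRy
    (four_mul_sq_radiusR3_le_one hx0 hx1 hy1 hreg2) (by linarith) (by linarith) hcontact.ge
    (by linarith)

theorem four_circles_packing_R3 (x y : ℝ) (hxy : 1 ≤ x ^ 2 + y ^ 2) (hy : 0 < y) (hx0 : 0 ≤ x) (hx1 : x ≤ 1 / 2)
    (hreg1 : Real.sqrt (1 / 3 - (x - 1 / 2) ^ 2) + Real.sqrt 3 / 2 ≤ y) (hreg2 : y < Real.sqrt (1 - (x - 1 / 2) ^ 2) + 3 * Real.sqrt 3 / 2)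
    (A3 B3 : ℝ) (hA3 : A3 = 9 + 5 * y ^ 2 - (2 * x - 1) ^ 2)
    (hB3 : B3 = ((x - 2) ^ 2 + y ^ 2) * ((x + 1) ^ 2 + y ^ 2))
    (r R : ℝ) (hr : r = Real.sqrt (A3 - Real.sqrt (A3 ^ 2 - 16 * B3)) / (8 * Real.sqrt 2))
    (hR : R = Real.sqrt (16 * r ^ 2 - 1))
    : IsPacking x y r ![pt 0 0, pt (1 / 2) (R / 2), pt 0 R, pt (1 / 2) (3 * R / 2)] :=
  four_circles_packing_R3_general x y hx0 hx1 hreg1 hreg2 A3 B3 hA3 hB3 r R hr hR
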